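/- arXiv:2410.04315 — 2 statements merged into one kernel-verified Lean document; each statement's English description precedes it below -/
import Mathlib

section
/- Let (Ω, F, P) be a probability space, X : Ω → 𝒳 a random variable into a measurable space 𝒳, S : Ω → [0,1] a random variable, and Y : Ω → {0,1} a random variable. Assume S and Y are conditionally independent given σ(X), i.e., for all bounded measurable f, g, E[f(S) g(Y) | σ(X)] = E[f(S) | σ(X)] · E[g(Y) | σ(X)] almost surely. Let I ⊆ [0,1] be a measurable set with P(S ∈ I) > 0, and let φ : 𝒳 → [0,1] be measurable with φ(X) a version of E[1{S ∈ I} | σ(X)]. Let ((X_n, Y_n))_{n≥1} be independent pairs each with the same joint law as (X, Y). Then the estimator r̂ = (Σ_{n=1}^N φ(X_n) Y_n) / (Σ_{n=1}^N φ(X_n)) converges in probability, as N → ∞, to the conditional expectation E[Y | S ∈ I] = E[Y · 1{S ∈ I}] / P(S ∈ I). -/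
open MeasureTheory ProbabilityTheory Filter Finset
open scoped Topology

/-!
Both sums are empirical means of bounded functions of the i.i.d. pairs `(X_n, Y_n)`, so by the
strong law their ratio converges almost surely, hence in probability, to
`E[φ(X) Y] / E[φ(X)]`. The denominator is `E[E[1{S ∈ I} | σ(X)]] = P(S ∈ I)`. For the
numerator, conditional independence factors `E[1{S ∈ I} Y | σ(X)]` as `φ(X) E[Y | σ(X)]`, and
pulling the `σ(X)`-measurable factor `φ(X)` back inside the conditional expectation gives
`E[1{S ∈ I} Y] = E[φ(X) Y]`.
-/

section StrongLaw

variable {Ω E : Type*} [MeasurableSpace Ω] {P : Measure Ω} [MeasurableSpace E]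
  {Zs : ℕ → Ω → E} {Z : Ω → E}

theorem strong_law_ae_comp (hindep : iIndepFun Zs P) (hident : ∀ n, IdentDistrib (Zs n) Z P P)
    {h : E → ℝ} (hh : Measurable h) (hint : Integrable (fun ω => h (Z ω)) P) :
    ∀ᵐ ω ∂P, Tendsto (fun N : ℕ => (∑ n ∈ range N, h (Zs n ω)) / N) atTop
      (𝓝 (∫ ω, h (Z ω) ∂P)) := by
  have hident' : ∀ n, IdentDistrib (fun ω => h (Zs n ω)) (fun ω => h (Z ω)) P P :=
    fun n => (hident n).comp hh
  rw [← (hident' 0).integral_eq]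
  exact strong_law_ae_real _ ((hident' 0).integrable_iff.2 hint)
    (fun i j hij => (hindep.indepFun hij).comp hh hh)
    (fun n => (hident' n).trans (hident' 0).symm)

theorem ae_tendsto_sum_div_sum (hindep : iIndepFun Zs P)
    (hident : ∀ n, IdentDistrib (Zs n) Z P P) {a b : E → ℝ} (ha : Measurable a)
    (hb : Measurable b) (hai : Integrable (fun ω => a (Z ω)) P)
    (hbi : Integrable (fun ω => b (Z ω)) P) (hb0 : ∫ ω, b (Z ω) ∂P ≠ 0) :
    ∀ᵐ ω ∂P, Tendsto (fun N => (∑ n ∈ range N, a (Zs n ω)) / ∑ n ∈ range N, b (Zs n ω))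
      atTop (𝓝 ((∫ ω, a (Z ω) ∂P) / ∫ ω, b (Z ω) ∂P)) := by
  filter_upwards [strong_law_ae_comp hindep hident ha hai,
    strong_law_ae_comp hindep hident hb hbi] with ω haω hbω
  refine (haω.div hbω hb0).congr' ?_
  filter_upwards [eventually_ne_atTop 0] with N hN
  exact div_div_div_cancel_right₀ (Nat.cast_ne_zero.2 hN) _ _

theorem tendstoInMeasure_sum_div_sum [IsFiniteMeasure P] (hZs : ∀ n, Measurable (Zs n))
    (hindep : iIndepFun Zs P) (hident : ∀ n, IdentDistrib (Zs n) Z P P) {a b : E → ℝ}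
    (ha : Measurable a) (hb : Measurable b) (hai : Integrable (fun ω => a (Z ω)) P)
    (hbi : Integrable (fun ω => b (Z ω)) P) (hb0 : ∫ ω, b (Z ω) ∂P ≠ 0) :
    TendstoInMeasure P
      (fun N ω => (∑ n ∈ range N, a (Zs n ω)) / ∑ n ∈ range N, b (Zs n ω)) atTop
      (fun _ => (∫ ω, a (Z ω) ∂P) / ∫ ω, b (Z ω) ∂P) :=
  tendstoInMeasure_of_tendsto_ae
    (fun _ => ((measurable_sum _ fun n _ => ha.comp (hZs n)).div
      (measurable_sum _ fun n _ => hb.comp (hZs n))).aestronglyMeasurable)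
    (ae_tendsto_sum_div_sum hindep hident ha hb hai hbi hb0)

end StrongLaw

theorem integral_mul_eq_of_condExp_mul_eq_mul {Ω : Type*} {m mΩ : MeasurableSpace Ω}
    {μ : Measure[mΩ] Ω} [IsFiniteMeasure μ] (hm : m ≤ mΩ) {f g φ : Ω → ℝ}
    (hφ : StronglyMeasurable[m] φ) (hφf : φ =ᵐ[μ] μ[f | m]) (hg : Integrable g μ)
    (hφg : Integrable (fun ω => φ ω * g ω) μ)
    (hfg : μ[fun ω => f ω * g ω | m] =ᵐ[μ] fun ω => μ[f | m] ω * μ[g | m] ω) :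
    ∫ ω, f ω * g ω ∂μ = ∫ ω, φ ω * g ω ∂μ :=
  calc ∫ ω, f ω * g ω ∂μ = ∫ ω, μ[fun ω => f ω * g ω | m] ω ∂μ := (integral_condExp hm).symm
    _ = ∫ ω, (φ * μ[g | m]) ω ∂μ := integral_congr_ae (hfg.trans (hφf.symm.mul .rfl))
    _ = ∫ ω, μ[φ * g | m] ω ∂μ :=
      integral_congr_ae (condExp_mul_of_stronglyMeasurable_left hφ hφg hg).symm
    _ = ∫ ω, φ ω * g ω ∂μ := integral_condExp hm

theorem abs_indicator_one_le {α : Type*} (s : Set α) (x : α) :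
    |s.indicator (fun _ => (1 : ℝ)) x| ≤ 1 := by
  by_cases hx : x ∈ s <;> simp [hx]

theorem consistency_r_hat_general
    {Ω : Type*} [MeasurableSpace Ω] (P : Measure Ω) [IsProbabilityMeasure P]
    {𝒳 : Type*} [MeasurableSpace 𝒳]
    (X : Ω → 𝒳) (hX : Measurable X)
    (S : Ω → ℝ) (hS : Measurable S)
    (Y : Ω → ℝ) (hY : Measurable Y) (hY01 : ∀ ω, Y ω = 0 ∨ Y ω = 1)
    (hCI : ∀ f g : ℝ → ℝ, Measurable f → Measurable g →
      (∃ C, ∀ x, |f x| ≤ C) → (∃ C, ∀ x, |g x| ≤ C) →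
      P[fun ω => f (S ω) * g (Y ω) | MeasurableSpace.comap X inferInstance] =ᵐ[P]
        fun ω => (P[fun ω' => f (S ω') | MeasurableSpace.comap X inferInstance]) ω *
          (P[fun ω' => g (Y ω') | MeasurableSpace.comap X inferInstance]) ω)
    (I : Set ℝ) (hI : MeasurableSet I) (hIpos : 0 < P (S ⁻¹' I))
    (φ : 𝒳 → ℝ) (hφ : Measurable φ) (hφ01 : ∀ x, φ x ∈ Set.Icc (0 : ℝ) 1)
    (hver : (fun ω => φ (X ω)) =ᵐ[P]
      P[(S ⁻¹' I).indicator (fun _ => (1 : ℝ)) | MeasurableSpace.comap X inferInstance])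
    (Xs : ℕ → Ω → 𝒳) (Ys : ℕ → Ω → ℝ)
    (hXs : ∀ n, Measurable (Xs n)) (hYs : ∀ n, Measurable (Ys n))
    (hindep : iIndepFun (fun n ω => (Xs n ω, Ys n ω)) P)
    (hident : ∀ n, Measure.map (fun ω => (Xs n ω, Ys n ω)) P
      = Measure.map (fun ω => (X ω, Y ω)) P) :
    TendstoInMeasure P
      (fun N ω => (∑ n ∈ Finset.range N, φ (Xs n ω) * Ys n ω) /
        (∑ n ∈ Finset.range N, φ (Xs n ω)))
      atTop
      (fun _ => (∫ ω, Y ω * (S ⁻¹' I).indicator (fun _ => (1 : ℝ)) ω ∂P) /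
        (P (S ⁻¹' I)).toReal) := by
  have hφ_le : ∀ x, |φ x| ≤ 1 := fun x => abs_le.2 ⟨by linarith [(hφ01 x).1], (hφ01 x).2⟩
  have hY_le : ∀ ω, |Y ω| ≤ 1 := fun ω => by rcases hY01 ω with h | h <;> simp [h]
  have hφX_int : Integrable (fun ω => φ (X ω)) P :=
    .of_bound (hφ.comp hX).aestronglyMeasurable 1 (.of_forall fun ω => hφ_le (X ω))
  have hφXY_int : Integrable (fun ω => φ (X ω) * Y ω) P :=
    .of_bound ((hφ.comp hX).mul hY).aestronglyMeasurable 1 (.of_forall fun ω =>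
      (abs_mul _ _).trans_le (mul_le_one₀ (hφ_le _) (abs_nonneg _) (hY_le ω)))
  have hden : ∫ ω, φ (X ω) ∂P = (P (S ⁻¹' I)).toReal := by
    rw [integral_congr_ae hver, integral_condExp hX.comap_le]
    exact integral_indicator_one (hS hI)
  have hfactor := hCI (I.indicator fun _ => 1) (({1} : Set ℝ).indicator fun _ => 1)
    (measurable_const.indicator hI) (measurable_const.indicator (measurableSet_singleton 1))
    ⟨1, abs_indicator_one_le I⟩ ⟨1, abs_indicator_one_le {1}⟩
  have hind : ∀ ω, I.indicator (fun _ => (1 : ℝ)) (S ω)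
      = (S ⁻¹' I).indicator (fun _ => 1) ω := fun ω => rfl
  have hY_ind : ∀ ω, ({1} : Set ℝ).indicator (fun _ => (1 : ℝ)) (Y ω) = Y ω := fun ω => by
    rcases hY01 ω with h | h <;> simp [h]
  simp only [hind, hY_ind] at hfactor
  have hnum : ∫ ω, φ (X ω) * Y ω ∂P
      = ∫ ω, Y ω * (S ⁻¹' I).indicator (fun _ => (1 : ℝ)) ω ∂P := by
    simp_rw [mul_comm (Y _)]
    exact (integral_mul_eq_of_condExp_mul_eq_mul hX.comap_le
      (hφ.comp (comap_measurable X)).stronglyMeasurable hver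
      (.of_bound hY.aestronglyMeasurable 1 (.of_forall hY_le)) hφXY_int hfactor).symm
  rw [← hnum, ← hden]
  exact tendstoInMeasure_sum_div_sum (fun n => (hXs n).prodMk (hYs n)) hindep
    (fun n => ⟨((hXs n).prodMk (hYs n)).aemeasurable, (hX.prodMk hY).aemeasurable, hident n⟩)
    (a := fun p => φ p.1 * p.2) (b := fun p => φ p.1)
    ((hφ.comp measurable_fst).mul measurable_snd) (hφ.comp measurable_fst) hφXY_int hφX_int
    (hden ▸ (ENNReal.toReal_pos hIpos.ne' (measure_ne_top _ _)).ne')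

/-- Consistency of the per-bin calibration-function estimator `r̂`:
under conditional independence of `S` and `Y` given `σ(X)`, if `φ(X)` is a version of
`E[1{S ∈ I} | σ(X)]` and `((X_n, Y_n))` are i.i.d. with the law of `(X, Y)`, then
`(∑ φ(X_n) Y_n) / (∑ φ(X_n))` converges in probability to
`E[Y | S ∈ I] = E[Y · 1{S ∈ I}] / P(S ∈ I)`. -/
theorem consistency_r_hat
    {Ω : Type*} [MeasurableSpace Ω] (P : Measure Ω) [IsProbabilityMeasure P]
    {𝒳 : Type*} [MeasurableSpace 𝒳]
    (X : Ω → 𝒳) (hX : Measurable X)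
    (S : Ω → ℝ) (hS : Measurable S) (hS01 : ∀ ω, S ω ∈ Set.Icc (0 : ℝ) 1)
    (Y : Ω → ℝ) (hY : Measurable Y) (hY01 : ∀ ω, Y ω = 0 ∨ Y ω = 1)
    (hCI : ∀ f g : ℝ → ℝ, Measurable f → Measurable g →
      (∃ C, ∀ x, |f x| ≤ C) → (∃ C, ∀ x, |g x| ≤ C) →
      P[fun ω => f (S ω) * g (Y ω) | MeasurableSpace.comap X inferInstance] =ᵐ[P]
        fun ω => (P[fun ω' => f (S ω') | MeasurableSpace.comap X inferInstance]) ω *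
          (P[fun ω' => g (Y ω') | MeasurableSpace.comap X inferInstance]) ω)
    (I : Set ℝ) (hI : MeasurableSet I) (hIpos : 0 < P (S ⁻¹' I))
    (φ : 𝒳 → ℝ) (hφ : Measurable φ) (hφ01 : ∀ x, φ x ∈ Set.Icc (0 : ℝ) 1)
    (hver : (fun ω => φ (X ω)) =ᵐ[P]
      P[(S ⁻¹' I).indicator (fun _ => (1 : ℝ)) | MeasurableSpace.comap X inferInstance])
    (Xs : ℕ → Ω → 𝒳) (Ys : ℕ → Ω → ℝ)
    (hXs : ∀ n, Measurable (Xs n)) (hYs : ∀ n, Measurable (Ys n))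
    (hindep : iIndepFun (fun n ω => (Xs n ω, Ys n ω)) P)
    (hident : ∀ n, Measure.map (fun ω => (Xs n ω, Ys n ω)) P
      = Measure.map (fun ω => (X ω, Y ω)) P) :
    TendstoInMeasure P
      (fun N ω => (∑ n ∈ Finset.range N, φ (Xs n ω) * Ys n ω) /
        (∑ n ∈ Finset.range N, φ (Xs n ω)))
      atTop
      (fun _ => (∫ ω, Y ω * (S ⁻¹' I).indicator (fun _ => (1 : ℝ)) ω ∂P) /
        (P (S ⁻¹' I)).toReal) :=
  consistency_r_hat_general P X hX S hS Y hY hY01 hCI I hI hIpos φ hφ hφ01 hver Xs Ys hXs hYs hindep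
    hident
end

section
/- Let (Ω, F, P) be a probability space, X : Ω → 𝒳 a random variable into a measurable space 𝒳, and S : Ω → [0,1] a random variable. Let I ⊆ [0,1] be a measurable set with P(S ∈ I) > 0. Let φ, ψ : 𝒳 → [0,1] be measurable functions such that φ(X) is a version of E[1{S ∈ I} | σ(X)] and ψ(X) is a version of E[S · 1{S ∈ I} | σ(X)]. Let (X_n)_{n≥1} be independent random variables each with the law of X. Then the estimator ĝ = (Σ_{n=1}^N ψ(X_n)) / (Σ_{n=1}^N φ(X_n)) converges in probability, as N → ∞, to E[S | S ∈ I] = E[S · 1{S ∈ I}] / P(S ∈ I). -/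
/-!
Both sums are sums of i.i.d. variables, integrable because `φ(X)` and `ψ(X)` are versions of
conditional expectations, so by the strong law of large numbers
`(1/N) ∑ φ(X_n) → E[φ(X)]` and `(1/N) ∑ ψ(X_n) → E[ψ(X)]` almost surely. By the tower property
these limits are `P(S ∈ I) > 0` and `E[S · 1{S ∈ I}]`, so the ratio converges almost surely,
hence in probability.
-/

open MeasureTheory ProbabilityTheory Filter Topology Finset

theorem tendsto_sum_div_sum_of_tendsto_avg {a b : ℕ → ℝ} {α β : ℝ}
    (ha : Tendsto (fun N : ℕ => (∑ n ∈ range N, a n) / N) atTop (𝓝 α))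
    (hb : Tendsto (fun N : ℕ => (∑ n ∈ range N, b n) / N) atTop (𝓝 β)) (hβ : β ≠ 0) :
    Tendsto (fun N => (∑ n ∈ range N, a n) / ∑ n ∈ range N, b n) atTop (𝓝 (α / β)) := by
  refine (ha.div hb hβ).congr' ?_
  filter_upwards [eventually_gt_atTop 0] with N hN
  exact div_div_div_cancel_right₀ (Nat.cast_ne_zero.mpr hN.ne') _ _

theorem ae_tendsto_avg_comp_of_iIndepFun {Ω 𝒳 : Type*} [MeasurableSpace Ω] [MeasurableSpace 𝒳]
    {P : Measure Ω} {X : Ω → 𝒳} {Xs : ℕ → Ω → 𝒳} (hX : AEMeasurable X P)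
    (hXs : ∀ n, AEMeasurable (Xs n) P) (hindep : iIndepFun Xs P)
    (hident : ∀ n, P.map (Xs n) = P.map X) {g : 𝒳 → ℝ} (hg : Measurable g)
    (hgX : Integrable (fun ω => g (X ω)) P) :
    ∀ᵐ ω ∂P, Tendsto (fun N : ℕ => (∑ n ∈ range N, g (Xs n ω)) / N) atTop
      (𝓝 (∫ ω, g (X ω) ∂P)) := by
  have hid n : IdentDistrib (fun ω => g (Xs n ω)) (fun ω => g (X ω)) P P :=
    IdentDistrib.comp ⟨hXs n, hX, hident n⟩ hg
  have hlaw := strong_law_ae_real (fun n ω => g (Xs n ω)) ((hid 0).integrable_iff.mpr hgX)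
    (fun i j hij => (hindep.indepFun hij).comp hg hg)
    (fun n => (hid n).trans (hid 0).symm)
  rwa [(hid 0).integral_eq] at hlaw

theorem consistency_g_hat_general
    {Ω : Type*} [MeasurableSpace Ω] (P : Measure Ω) [IsProbabilityMeasure P]
    {𝒳 : Type*} [MeasurableSpace 𝒳]
    (X : Ω → 𝒳) (hX : Measurable X)
    (S : Ω → ℝ) (hS : Measurable S)
    (I : Set ℝ) (hI : MeasurableSet I) (hIpos : 0 < P (S ⁻¹' I))
    (φ : 𝒳 → ℝ) (hφ : Measurable φ)
    (ψ : 𝒳 → ℝ) (hψ : Measurable ψ)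
    (hverφ : (fun ω => φ (X ω)) =ᵐ[P]
      P[(S ⁻¹' I).indicator (fun _ => (1 : ℝ)) | MeasurableSpace.comap X inferInstance])
    (hverψ : (fun ω => ψ (X ω)) =ᵐ[P]
      P[fun ω => S ω * (S ⁻¹' I).indicator (fun _ => (1 : ℝ)) ω |
        MeasurableSpace.comap X inferInstance])
    (Xs : ℕ → Ω → 𝒳) (hXs : ∀ n, Measurable (Xs n))
    (hindep : iIndepFun Xs P)
    (hident : ∀ n, Measure.map (Xs n) P = Measure.map X P) :
    TendstoInMeasure P
      (fun N ω => (∑ n ∈ Finset.range N, ψ (Xs n ω)) /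
        (∑ n ∈ Finset.range N, φ (Xs n ω)))
      atTop
      (fun _ => (∫ ω, S ω * (S ⁻¹' I).indicator (fun _ => (1 : ℝ)) ω ∂P) /
        (P (S ⁻¹' I)).toReal) := by
  have hm := hX.comap_le
  have hEφ : ∫ ω, φ (X ω) ∂P = (P (S ⁻¹' I)).toReal := by
    rw [integral_congr_ae hverφ, integral_condExp hm, ← Pi.one_def, integral_indicator_one (hS hI),
      measureReal_def]
  have hEψ := (integral_congr_ae hverψ).trans (integral_condExp hm)
  have hlaw {g : 𝒳 → ℝ} (hg : Measurable g) := ae_tendsto_avg_comp_of_iIndepFun hX.aemeasurable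
    (fun n => (hXs n).aemeasurable) hindep hident hg
  refine tendstoInMeasure_of_tendsto_ae (fun N => Measurable.aestronglyMeasurable (by fun_prop)) ?_
  filter_upwards [hlaw hφ (integrable_condExp.congr hverφ.symm),
    hlaw hψ (integrable_condExp.congr hverψ.symm)] with ω hφω hψω
  rw [hEφ] at hφω
  rw [hEψ] at hψω
  exact tendsto_sum_div_sum_of_tendsto_avg hψω hφω
    (ENNReal.toReal_pos hIpos.ne' (by finiteness)).ne'

/-- Consistency of the per-bin mean-prediction estimator `ĝ`:
if `φ(X)` is a version of `E[1{S ∈ I} | σ(X)]` and `ψ(X)` is a version of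
`E[S · 1{S ∈ I} | σ(X)]`, and `(X_n)` are i.i.d. with the law of `X`, then
`(∑ ψ(X_n)) / (∑ φ(X_n))` converges in probability to
`E[S | S ∈ I] = E[S · 1{S ∈ I}] / P(S ∈ I)`. -/
theorem consistency_g_hat
    {Ω : Type*} [MeasurableSpace Ω] (P : Measure Ω) [IsProbabilityMeasure P]
    {𝒳 : Type*} [MeasurableSpace 𝒳]
    (X : Ω → 𝒳) (hX : Measurable X)
    (S : Ω → ℝ) (hS : Measurable S) (hS01 : ∀ ω, S ω ∈ Set.Icc (0 : ℝ) 1)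
    (I : Set ℝ) (hI : MeasurableSet I) (hIpos : 0 < P (S ⁻¹' I))
    (φ : 𝒳 → ℝ) (hφ : Measurable φ) (hφ01 : ∀ x, φ x ∈ Set.Icc (0 : ℝ) 1)
    (ψ : 𝒳 → ℝ) (hψ : Measurable ψ) (hψ01 : ∀ x, ψ x ∈ Set.Icc (0 : ℝ) 1)
    (hverφ : (fun ω => φ (X ω)) =ᵐ[P]
      P[(S ⁻¹' I).indicator (fun _ => (1 : ℝ)) | MeasurableSpace.comap X inferInstance])
    (hverψ : (fun ω => ψ (X ω)) =ᵐ[P]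
      P[fun ω => S ω * (S ⁻¹' I).indicator (fun _ => (1 : ℝ)) ω |
        MeasurableSpace.comap X inferInstance])
    (Xs : ℕ → Ω → 𝒳) (hXs : ∀ n, Measurable (Xs n))
    (hindep : iIndepFun Xs P)
    (hident : ∀ n, Measure.map (Xs n) P = Measure.map X P) :
    TendstoInMeasure P
      (fun N ω => (∑ n ∈ Finset.range N, ψ (Xs n ω)) /
        (∑ n ∈ Finset.range N, φ (Xs n ω)))
      atTop
      (fun _ => (∫ ω, S ω * (S ⁻¹' I).indicator (fun _ => (1 : ℝ)) ω ∂P) /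
        (P (S ⁻¹' I)).toReal) :=
  consistency_g_hat_general P X hX S hS I hI hIpos φ hφ ψ hψ hverφ hverψ Xs hXs hindep hident
end
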